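/- Conversely, if Σ_h C_h / T_h < 1, then the iteration w_0 = C, w_{k+1} = C + Σ_h ⌈w_k/T_h⌉·C_h is bounded above by (C + Σ_h C_h) / (1 − Σ_h C_h/T_h). -/
import Mathlib


theorem iteration_bounded_of_utilization_lt_one {ι : Type*} (H : Finset ι) (T Ch : ι → ℝ)
    (C : ℝ) (hC : 0 ≤ C) (hT : ∀ h ∈ H, 0 < T h) (hCh : ∀ h ∈ H, 0 ≤ Ch h)
    (hU : ∑ h ∈ H, Ch h / T h < 1)
    (w : ℕ → ℝ) (hw0 : w 0 = C)
    (hwrec : ∀ k, w (k + 1) = C + ∑ h ∈ H, (⌈w k / T h⌉ : ℝ) * Ch h) :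
    ∀ k, w k ≤ (C + ∑ h ∈ H, Ch h) / (1 - ∑ h ∈ H, Ch h / T h) := by
  set U : ℝ := ∑ h ∈ H, Ch h / T h with hUdef
  set B : ℝ := (C + ∑ h ∈ H, Ch h) / (1 - U) with hBdef
  have hU0 : 0 ≤ U := Finset.sum_nonneg fun h hh => div_nonneg (hCh h hh) (hT h hh).le
  have hden : 0 < 1 - U := by linarith
  have hChsum : 0 ≤ ∑ h ∈ H, Ch h := Finset.sum_nonneg fun h hh => hCh h hh
  have hBeq : B * (1 - U) = C + ∑ h ∈ H, Ch h := by
    rw [hBdef]; field_simp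
  have hB0 : 0 ≤ B := div_nonneg (by linarith) hden.le
  have hCB : C ≤ B := by nlinarith
  intro k
  induction k with
  | zero => rw [hw0]; exact hCB
  | succ k ih =>
    rw [hwrec]
    have hstep : ∑ h ∈ H, (⌈w k / T h⌉ : ℝ) * Ch h
        ≤ ∑ h ∈ H, (B / T h + 1) * Ch h := by
      apply Finset.sum_le_sum
      intro h hh
      apply mul_le_mul_of_nonneg_right _ (hCh h hh)
      have h1 : (⌈w k / T h⌉ : ℝ) < w k / T h + 1 := Int.ceil_lt_add_one _
      have h2 : w k / T h ≤ B / T h := div_le_div_of_nonneg_right ih (hT h hh).le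
      linarith
    have hsum : ∑ h ∈ H, (B / T h + 1) * Ch h = B * U + ∑ h ∈ H, Ch h := by
      rw [hUdef, Finset.mul_sum, ← Finset.sum_add_distrib]
      apply Finset.sum_congr rfl
      intro h hh
      have : T h ≠ 0 := (hT h hh).ne'
      field_simp
    nlinarith
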